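/- In the quantum torus algebra of the A₂ root lattice (generators X_γ for γ in the root lattice, with X_γ X_δ = q^{2⟨γ,δ⟩} X_δ X_γ and ⟨α₁,α₂⟩ = 1, X_{γ+δ} = q^{-⟨γ,δ⟩}X_γX_δ), the wall-crossing formula holds: Ψ(-X_{α₁})Ψ(-X_{α₂}) = Ψ(-X_{α₂})Ψ(-X_{α₁+α₂})Ψ(-X_{α₁}), and this identity determines the degeneracies Ω = 1 for the three positive roots α₁, α₂, α₁+α₂ uniquely: no other finite product of quantum dilogarithms Ψ(-X_β)^{n_β} over positive roots β, ordered by decreasing then increasing slope, equals the left side. -/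

import Mathlib

open scoped BigOperators

/-- The finite q-Pochhammer symbol `(q²;q²)_d = ∏_{k=0}^{d-1} (1 - q^{2k+2})`. -/
noncomputable def qfac (q : ℂ) (d : ℕ) : ℂ := ∏ k ∈ Finset.range d, (1 - q ^ (2 * k + 2))

/-- The operator `Ψ(-X_{α₁})` in the standard module of the A₂ quantum torus
(`X_{α₁}` is the diagonal operator `q^{2n}`, `X_{α₂}` the shift, so that
`X_{α₁}X_{α₂} = q² X_{α₂}X_{α₁}`, i.e. `⟨α₁,α₂⟩ = 1`). -/
noncomputable def PsiX1 (q : ℂ) (v : ℕ → ℂ) : ℕ → ℂ :=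
  fun n => (∑' d : ℕ, q ^ d * (-q ^ (2 * n)) ^ d / qfac q d) * v n

/-- The operator `Ψ(-X_{α₂})`. -/
noncomputable def PsiX2 (q : ℂ) (v : ℕ → ℂ) : ℕ → ℂ :=
  fun n => ∑ d ∈ Finset.range (n + 1), (-1) ^ d * q ^ d / qfac q d * v (n - d)

/-- The operator `Ψ(-X_{α₁+α₂})`, `X_{α₁+α₂} = q⁻¹X_{α₁}X_{α₂}`. -/
noncomputable def PsiX12 (q : ℂ) (v : ℕ → ℂ) : ℕ → ℂ :=
  fun n => ∑ d ∈ Finset.range (n + 1),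
    (-1) ^ d * q ^ (d * (2 * n + 1 - d)) / qfac q d * v (n - d)

open Filter Topology Finset

/-!
In the basis `e_n` of the standard module, `Ψ(-X_{α₁})` is diagonal with eigenvalues `F_n`
satisfying `F_{n+1} = (1 + q^{2n+1}) F_n`, while `Ψ(-X_{α₂})` and `Ψ(-X_{α₁+α₂})` are unipotent
lower triangular. On the matrix entry `(m + k, m)` the wall-crossing formula becomes, after
division by `F_m`, the `q`-binomial theorem for `∏_{j<k} (1 + q^{2m} q^{2j+1})`.

For uniqueness, compare the diagonal and subdiagonal entries of both sides. The diagonal gives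
`F_n^c = F_n`; since `F_n ≠ 0` (it tends to `1`, and a zero would propagate to all larger `n`),
this says `(1 + q^{2n+1})^c = 1 + q^{2n+1}` for the infinitely many distinct numbers
`1 + q^{2n+1}`, so `c = 1`. The subdiagonal then gives `b q^{2n+1} + a = 1 + q^{2n+1}` for all `n`,
so `a = b = 1`.
-/

section NormLtOne

variable {R : Type*} [NormedRing R] [NormOneClass R] {z : R}

lemma one_sub_ne_zero_of_norm_lt_one (hz : ‖z‖ < 1) : 1 - z ≠ 0 := fun h => by
  simp [← sub_eq_zero.mp h] at hz

lemma one_add_ne_zero_of_norm_lt_one (hz : ‖z‖ < 1) : 1 + z ≠ 0 := by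
  simpa using one_sub_ne_zero_of_norm_lt_one (z := -z) (by rwa [norm_neg])

lemma norm_pow_lt_one (hz : ‖z‖ < 1) {j : ℕ} (hj : j ≠ 0) : ‖z ^ j‖ < 1 :=
  (norm_pow_le z j).trans_lt (pow_lt_one₀ (norm_nonneg z) hz hj)

end NormLtOne

lemma summable_of_norm_succ_mul_le {E : Type*} [NormedAddCommGroup E] [CompleteSpace E]
    {f : ℕ → E} {c : ℕ → ℝ} {s : ℝ} (hs : s < 1) (hc : Tendsto c atTop (𝓝 1))
    (h : ∀ d, ‖f (d + 1)‖ * c d ≤ s * ‖f d‖) : Summable f := by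
  obtain ⟨r, hsr, hr1⟩ := exists_between hs
  refine summable_of_ratio_norm_eventually_le hr1 ?_
  have hpos : ∀ᶠ d in atTop, 0 < c d := hc.eventually_const_lt one_pos
  have hlt : ∀ᶠ d in atTop, s < r * c d :=
    (hc.const_mul r).eventually_const_lt (by rwa [mul_one])
  filter_upwards [hpos, hlt] with d hpos hlt
  refine le_of_mul_le_mul_right ?_ hpos
  calc ‖f (d + 1)‖ * c d ≤ s * ‖f d‖ := h d
    _ ≤ r * c d * ‖f d‖ := mul_le_mul_of_nonneg_right hlt.le (norm_nonneg _)
    _ = r * ‖f d‖ * c d := by ring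

lemma sum_range_sum_range_sub {M : Type*} [AddCommMonoid M] (n : ℕ) (g : ℕ → ℕ → M) :
    ∑ d ∈ range (n + 1), ∑ e ∈ range (n - d + 1), g d e =
      ∑ k ∈ range (n + 1), ∑ e ∈ range (k + 1), g (k - e) e := by
  rw [sum_sigma', sum_sigma']
  refine sum_nbij' (fun p => ⟨p.1 + p.2, p.2⟩) (fun p => ⟨p.1 - p.2, p.2⟩) ?_ ?_ ?_ ?_ ?_ <;>
    rintro ⟨d, e⟩ hp <;> simp only [mem_sigma, mem_range] at hp ⊢
  · omega
  · omega
  · rw [Nat.add_sub_cancel]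
  · rw [Nat.sub_add_cancel (by omega)]
  · rw [Nat.add_sub_cancel]

section LowerTriangular

variable {R : Type*} [Semiring R]

/-- The lower-triangular operator with matrix entries `co n d` at position `(n, n - d)`. -/
def lowerConv (co : ℕ → ℕ → R) (v : ℕ → R) (n : ℕ) : R :=
  ∑ d ∈ range (n + 1), co n d * v (n - d)

lemma lowerConv_lowerConv_apply (a b : ℕ → ℕ → R) (v : ℕ → R) (n : ℕ) :
    lowerConv a (lowerConv b v) n =
      ∑ k ∈ range (n + 1), (∑ e ∈ range (k + 1), a n (k - e) * b (n - k + e) e) * v (n - k) := by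
  simp only [lowerConv, mul_sum, sum_mul]
  rw [sum_range_sum_range_sub]
  refine sum_congr rfl fun k hk => sum_congr rfl fun e he => ?_
  rw [mem_range] at hk he
  rw [show n - (k - e) = n - k + e by omega, show n - k + e - e = n - k by omega, mul_assoc]

structure StartsWith (v : ℕ → R) (n : ℕ) (x y : R) : Prop where
  apply_of_lt : ∀ m < n, v m = 0
  apply_self : v n = x
  apply_succ : v (n + 1) = y

variable {v : ℕ → R} {n : ℕ} {x y : R}

lemma StartsWith.single (n : ℕ) : StartsWith (Pi.single n 1 : ℕ → R) n 1 0 :=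
  ⟨fun _ hm => Pi.single_eq_of_ne hm.ne 1, Pi.single_eq_same n 1,
    Pi.single_eq_of_ne (Nat.succ_ne_self n) 1⟩

lemma StartsWith.lowerConv {co : ℕ → ℕ → R} (hco : ∀ p, co p 0 = 1) (h : StartsWith v n x y) :
    StartsWith (_root_.lowerConv co v) n x (y + co (n + 1) 1 * x) := by
  have hsplit : ∀ p, _root_.lowerConv co v p =
      co p 0 * v p + ∑ d ∈ range p, co p (d + 1) * v (p - (d + 1)) := fun p => by
    rw [_root_.lowerConv, sum_range_succ', add_comm, Nat.sub_zero]
  have hvanish : ∀ p d, p - d < n → co p d * v (p - d) = 0 := fun p d hpd => by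
    rw [h.apply_of_lt _ hpd, mul_zero]
  refine ⟨fun m hm => sum_eq_zero fun d _ => hvanish m d (by omega), ?_, ?_⟩
  · rw [hsplit, hco, one_mul, h.apply_self, sum_eq_zero fun d hd =>
      hvanish n (d + 1) (by have := mem_range.mp hd; omega), add_zero]
  · rw [hsplit, hco, one_mul, h.apply_succ, sum_range_succ', Nat.add_sub_add_right, Nat.sub_zero,
      h.apply_self, sum_eq_zero fun d hd =>
        hvanish (n + 1) (d + 1 + 1) (by have := mem_range.mp hd; omega), zero_add]

lemma StartsWith.iterate_lowerConv {co : ℕ → ℕ → R} (hco : ∀ p, co p 0 = 1)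
    (h : StartsWith v n x y) (a : ℕ) :
    StartsWith ((_root_.lowerConv co)^[a] v) n x (y + a * (co (n + 1) 1 * x)) := by
  induction a with
  | zero => simpa using h
  | succ a ih =>
    rw [Function.iterate_succ_apply', Nat.cast_succ, add_one_mul, ← add_assoc]
    exact ih.lowerConv hco

lemma StartsWith.mul_left (f : ℕ → R) (h : StartsWith v n x y) :
    StartsWith (fun m => f m * v m) n (f n * x) (f (n + 1) * y) :=
  ⟨fun m hm => by rw [h.apply_of_lt m hm, mul_zero], by rw [h.apply_self], by rw [h.apply_succ]⟩

lemma StartsWith.iterate_mul_left (f : ℕ → R) (h : StartsWith v n x y) (c : ℕ) :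
    StartsWith ((fun w m => f m * w m)^[c] v) n (f n ^ c * x) (f (n + 1) ^ c * y) := by
  induction c with
  | zero => simpa using h
  | succ c ih =>
    rw [Function.iterate_succ_apply', pow_succ', pow_succ', mul_assoc, mul_assoc]
    exact ih.mul_left f

end LowerTriangular

lemma eq_one_of_forall_pow_eq_self {R : Type*} [CommRing R] [IsDomain R] {x : ℕ → R}
    (hx : Function.Injective x) (hx0 : ∀ n, x n ≠ 0) {c : ℕ} (h : ∀ n, x n ^ c = x n) :
    c = 1 := by
  classical
  obtain _ | _ | m := c
  · exact absurd (hx (by rw [← h 0, ← h 1, pow_zero, pow_zero])) zero_ne_one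
  · rfl
  · have hroot : ∀ n, x n ∈ (Polynomial.nthRoots (m + 1) (1 : R)).toFinset := fun n => by
      rw [Multiset.mem_toFinset, Polynomial.mem_nthRoots m.succ_pos]
      exact mul_right_cancel₀ (hx0 n) (by rw [← pow_succ, h n, one_mul])
    exact absurd ((Polynomial.nthRoots (m + 1) (1 : R)).toFinset.finite_toSet.subset
      (Set.range_subset_iff.2 hroot)) (Set.infinite_range_of_injective hx)

variable {q : ℂ}

lemma qfac_succ (q : ℂ) (d : ℕ) : qfac q (d + 1) = qfac q d * (1 - q ^ (2 * d + 2)) :=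
  prod_range_succ _ _

@[simp] lemma qfac_zero (q : ℂ) : qfac q 0 = 1 := prod_range_zero _

lemma qfac_ne_zero (hq : ‖q‖ < 1) (d : ℕ) : qfac q d ≠ 0 :=
  prod_ne_zero_iff.2 fun _ _ => one_sub_ne_zero_of_norm_lt_one (norm_pow_lt_one hq (by omega))

/-- Gaussian binomial coefficients in base `q²`, by the `q`-Pascal rule. -/
noncomputable def qBinom (q : ℂ) : ℕ → ℕ → ℂ
  | _, 0 => 1
  | 0, _ + 1 => 0
  | k + 1, e + 1 => qBinom q k e + q ^ (2 * (e + 1)) * qBinom q k (e + 1)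

@[simp] lemma qBinom_zero_right (q : ℂ) (k : ℕ) : qBinom q k 0 = 1 := by cases k <;> rfl

lemma qBinom_succ_succ (q : ℂ) (k e : ℕ) :
    qBinom q (k + 1) (e + 1) = qBinom q k e + q ^ (2 * (e + 1)) * qBinom q k (e + 1) := rfl

lemma qBinom_eq_zero_of_lt (q : ℂ) : ∀ {k e : ℕ}, k < e → qBinom q k e = 0
  | 0, _ + 1, _ => rfl
  | k + 1, e + 1, h => by
    rw [qBinom_succ_succ, qBinom_eq_zero_of_lt q (by omega), qBinom_eq_zero_of_lt q (by omega),
      mul_zero, add_zero]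

@[simp] lemma qBinom_self (q : ℂ) : ∀ k : ℕ, qBinom q k k = 1
  | 0 => rfl
  | k + 1 => by
    rw [qBinom_succ_succ, qBinom_self q k, qBinom_eq_zero_of_lt q k.lt_succ_self, mul_zero,
      add_zero]

lemma qBinom_add_mul_qfac_mul_qfac (q : ℂ) :
    ∀ i j : ℕ, qBinom q (i + j) i * qfac q i * qfac q j = qfac q (i + j)
  | 0, j => by simp
  | i + 1, 0 => by simp
  | i + 1, j + 1 => by
    have h₁ := qBinom_add_mul_qfac_mul_qfac q i (j + 1)
    have h₂ := qBinom_add_mul_qfac_mul_qfac q (i + 1) j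
    rw [show i + 1 + j = i + (j + 1) by ring] at h₂
    rw [show i + 1 + (j + 1) = i + (j + 1) + 1 by ring, qBinom_succ_succ, qfac_succ q (i + (j + 1))]
    rw [qfac_succ q i, qfac_succ q j] at *
    linear_combination (1 - q ^ (2 * i + 2)) * h₁ + q ^ (2 * (i + 1)) * (1 - q ^ (2 * j + 2)) * h₂

/-- The `q`-binomial theorem (Cauchy), in base `q²`. -/
theorem prod_one_add_mul_pow_eq_sum_qBinom (q : ℂ) (k : ℕ) (t : ℂ) :
    ∏ j ∈ range k, (1 + t * q ^ (2 * j + 1)) =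
      ∑ e ∈ range (k + 1), qBinom q k e * q ^ (e ^ 2) * t ^ e := by
  induction k generalizing t with
  | zero => simp
  | succ k ih =>
    set f : ℕ → ℂ := fun e => qBinom q k e * q ^ (e ^ 2) * (t * q ^ 2) ^ e with hf
    have htop : f (k + 1) = 0 := by simp [hf, qBinom_eq_zero_of_lt q k.lt_succ_self]
    calc ∏ j ∈ range (k + 1), (1 + t * q ^ (2 * j + 1))
        = (∑ e ∈ range (k + 1), f e) * (1 + t * q) := by
          rw [prod_range_succ', ← ih]
          congr 1
          · exact prod_congr rfl fun j _ => by ring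
          · ring
      _ = ∑ e ∈ range (k + 1), f e * (t * q) + ∑ e ∈ range (k + 1 + 1), f e := by
          rw [sum_range_succ f (k + 1), htop, add_zero, sum_mul, ← sum_add_distrib]
          exact sum_congr rfl fun e _ => by ring
      _ = ∑ e ∈ range (k + 1),
            (qBinom q k e + q ^ (2 * (e + 1)) * qBinom q k (e + 1)) *
              q ^ ((e + 1) ^ 2) * t ^ (e + 1) + 1 := by
          rw [sum_range_succ' f (k + 1), ← add_assoc, ← sum_add_distrib]
          simp only [hf, qBinom_zero_right]
          congr 1
          · exact sum_congr rfl fun e _ => by ring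
          · ring
      _ = ∑ e ∈ range (k + 1 + 1), qBinom q (k + 1) e * q ^ (e ^ 2) * t ^ e := by
          rw [sum_range_succ' _ (k + 1)]
          simp [qBinom_succ_succ]

noncomputable def psi1Term (q : ℂ) (n d : ℕ) : ℂ := q ^ d * (-q ^ (2 * n)) ^ d / qfac q d

/-- The eigenvalue of `Ψ(-X_{α₁})` on the `n`-th basis vector. -/
noncomputable def psi1Eigen (q : ℂ) (n : ℕ) : ℂ := ∑' d, psi1Term q n d

lemma PsiX1_eq_mul (q : ℂ) : PsiX1 q = fun w m => psi1Eigen q m * w m := rfl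

lemma psi1Term_eq_pow_mul (q : ℂ) (n d : ℕ) :
    psi1Term q n d = (q ^ (2 * d)) ^ n * psi1Term q 0 d := by
  simp only [psi1Term, neg_pow (q ^ _), ← pow_mul]
  ring

lemma psi1Term_succ_mul (hq : ‖q‖ < 1) (n d : ℕ) :
    psi1Term q n (d + 1) * (1 - q ^ (2 * d + 2)) = -q ^ (2 * n + 1) * psi1Term q n d := by
  simp only [psi1Term, qfac_succ]
  field_simp [qfac_ne_zero hq d,
    one_sub_ne_zero_of_norm_lt_one (norm_pow_lt_one hq (j := 2 * d + 2) (by omega))]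
  ring

lemma summable_psi1Term (hq : ‖q‖ < 1) (n : ℕ) : Summable (psi1Term q n) := by
  refine summable_of_norm_succ_mul_le (c := fun d => ‖1 - q ^ (2 * d + 2)‖)
    (norm_pow_lt_one hq (Nat.succ_ne_zero (2 * n))) ?_ fun d => ?_
  · have h : Tendsto (fun d : ℕ => q ^ (2 * d + 2)) atTop (𝓝 0) :=
      (tendsto_pow_atTop_nhds_zero_of_norm_lt_one hq).comp
        (tendsto_atTop_mono (fun d => by simp only [id_eq]; omega) tendsto_id)
    simpa using ((tendsto_const_nhds (x := (1 : ℂ))).sub h).norm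
  · rw [← norm_mul, psi1Term_succ_mul hq, norm_mul, norm_neg]

lemma psi1Eigen_succ (hq : ‖q‖ < 1) (n : ℕ) :
    psi1Eigen q (n + 1) = (1 + q ^ (2 * n + 1)) * psi1Eigen q n := by
  have hsum : HasSum (psi1Term q n) (psi1Eigen q n) := (summable_psi1Term hq n).hasSum
  have hshift : (fun d => (q ^ (2 * (d + 1)) - 1) * psi1Term q n (d + 1)) =
      fun d => q ^ (2 * n + 1) * psi1Term q n d :=
    funext fun d => by linear_combination (-1 : ℂ) * psi1Term_succ_mul hq n d
  have hdiff : HasSum (fun d => (q ^ (2 * d) - 1) * psi1Term q n d)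
      (q ^ (2 * n + 1) * psi1Eigen q n) := by
    rw [← hasSum_nat_add_iff' 1, sum_range_one, mul_zero, pow_zero, sub_self, zero_mul, sub_zero,
      hshift]
    exact hsum.mul_left _
  have hfun : psi1Term q (n + 1) = fun d => psi1Term q n d + (q ^ (2 * d) - 1) * psi1Term q n d :=
    funext fun d => by rw [psi1Term_eq_pow_mul, psi1Term_eq_pow_mul q n]; ring
  rw [psi1Eigen, hfun, (hsum.add hdiff).tsum_eq]
  ring

lemma tendsto_psi1Eigen (hq : ‖q‖ < 1) : Tendsto (psi1Eigen q) atTop (𝓝 1) := by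
  have hlim : ∀ d, Tendsto (fun N => psi1Term q N d) atTop
      (𝓝 (if d = 0 then 1 else 0)) := by
    intro d
    have hfun : (fun N => psi1Term q N d) = fun N => (q ^ (2 * d)) ^ N * psi1Term q 0 d :=
      funext fun N => psi1Term_eq_pow_mul q N d
    rw [hfun]
    rcases eq_or_ne d 0 with rfl | hd
    · simp [psi1Term]
    · simpa [hd] using (tendsto_pow_atTop_nhds_zero_of_norm_lt_one
        (norm_pow_lt_one hq (j := 2 * d) (by omega))).mul_const (psi1Term q 0 d)
  have hbound : ∀ N d, ‖psi1Term q N d‖ ≤ ‖psi1Term q 0 d‖ := fun N d => by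
    rw [psi1Term_eq_pow_mul, norm_mul, ← pow_mul, norm_pow]
    exact mul_le_of_le_one_left (norm_nonneg _) (pow_le_one₀ (norm_nonneg _) hq.le)
  have h := tendsto_tsum_of_dominated_convergence (summable_psi1Term hq 0).norm hlim
    (Eventually.of_forall hbound)
  rwa [tsum_ite_eq] at h

lemma psi1Eigen_ne_zero (hq : ‖q‖ < 1) (n : ℕ) : psi1Eigen q n ≠ 0 := by
  intro h0
  have hzero : ∀ N ≥ n, psi1Eigen q N = 0 := fun N hN => by
    induction N, hN using Nat.le_induction with
    | base => exact h0
    | succ N _ ih => rw [psi1Eigen_succ hq, ih, mul_zero]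
  have : Tendsto (psi1Eigen q) atTop (𝓝 0) :=
    tendsto_const_nhds.congr' (eventually_atTop.2 ⟨n, fun N hN => (hzero N hN).symm⟩)
  exact one_ne_zero (tendsto_nhds_unique (tendsto_psi1Eigen hq) this)

/-- The coefficient of `x ^ d` in `Ψ(-x) = ∑ q^d (-x)^d / (q²;q²)_d`. -/
noncomputable def psiCoeff (q : ℂ) (d : ℕ) : ℂ := (-1) ^ d * q ^ d / qfac q d

noncomputable def psi12Coeff (q : ℂ) (n d : ℕ) : ℂ :=
  (-1) ^ d * q ^ (d * (2 * n + 1 - d)) / qfac q d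

lemma PsiX2_eq_lowerConv (q : ℂ) : PsiX2 q = lowerConv fun _ => psiCoeff q := rfl

lemma PsiX12_eq_lowerConv (q : ℂ) : PsiX12 q = lowerConv (psi12Coeff q) := rfl

lemma psi1Eigen_add (hq : ‖q‖ < 1) (m k : ℕ) :
    psi1Eigen q (m + k) = psi1Eigen q m * ∏ j ∈ range k, (1 + q ^ (2 * m) * q ^ (2 * j + 1)) := by
  induction k with
  | zero => simp
  | succ k ih =>
    rw [← add_assoc, psi1Eigen_succ hq, ih, prod_range_succ]
    ring

lemma qBinom_mul_psiCoeff (hq : ‖q‖ < 1) (m e j : ℕ) :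
    qBinom q (e + j) e * q ^ (e ^ 2) * (q ^ (2 * m)) ^ e * psiCoeff q (e + j) =
      psiCoeff q j * psi12Coeff q (m + e) e := by
  have hgb := qBinom_add_mul_qfac_mul_qfac q e j
  have hexp : e * (2 * (m + e) + 1 - e) = e * (2 * m + e + 1) := by
    congr 1; omega
  simp only [psiCoeff, psi12Coeff, hexp]
  field_simp [qfac_ne_zero hq]
  rw [← hgb]
  ring

/-- The wall-crossing identity, read off on the matrix entry at position `(m + k, m)`. -/
lemma psi1Eigen_add_mul_psiCoeff (hq : ‖q‖ < 1) (m k : ℕ) :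
    psi1Eigen q (m + k) * psiCoeff q k =
      psi1Eigen q m * ∑ e ∈ range (k + 1), psiCoeff q (k - e) * psi12Coeff q (m + e) e := by
  rw [psi1Eigen_add hq, mul_assoc, prod_one_add_mul_pow_eq_sum_qBinom, sum_mul]
  refine congrArg _ (sum_congr rfl fun e he => ?_)
  obtain ⟨j, rfl⟩ := Nat.exists_eq_add_of_le (Nat.lt_succ_iff.mp (mem_range.mp he))
  rw [Nat.add_sub_cancel_left, qBinom_mul_psiCoeff hq]

theorem PsiX1_PsiX2 (hq : ‖q‖ < 1) (v : ℕ → ℂ) :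
    PsiX1 q (PsiX2 q v) = PsiX2 q (PsiX12 q (PsiX1 q v)) := by
  funext n
  simp only [PsiX1_eq_mul, PsiX2_eq_lowerConv, PsiX12_eq_lowerConv]
  rw [lowerConv_lowerConv_apply, lowerConv, mul_sum]
  refine sum_congr rfl fun k hk => ?_
  have hkey := psi1Eigen_add_mul_psiCoeff hq (n - k) k
  rw [Nat.sub_add_cancel (Nat.lt_succ_iff.mp (mem_range.mp hk))] at hkey
  linear_combination v (n - k) * hkey

@[simp] lemma psiCoeff_zero (q : ℂ) : psiCoeff q 0 = 1 := by simp [psiCoeff]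

@[simp] lemma psi12Coeff_zero (q : ℂ) (n : ℕ) : psi12Coeff q n 0 = 1 := by simp [psi12Coeff]

lemma psi12Coeff_succ_one (q : ℂ) (n : ℕ) :
    psi12Coeff q (n + 1) 1 = q ^ (2 * n + 1) * psiCoeff q 1 := by
  simp only [psi12Coeff, psiCoeff, one_mul, show 2 * (n + 1) + 1 - 1 = 2 * n + 1 + 1 by omega,
    pow_succ]
  ring

lemma psiCoeff_one_ne_zero (hq : ‖q‖ < 1) (hq0 : q ≠ 0) : psiCoeff q 1 ≠ 0 := by
  simp [psiCoeff, hq0, qfac_ne_zero hq]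

/-- The diagonal and subdiagonal matrix entries, at column `n`, of the two sides of a
factorization. -/
lemma psi1Eigen_pow_eq_and_subdiag_eq {a b c : ℕ}
    (h : ∀ v : ℕ → ℂ, (PsiX2 q)^[a] ((PsiX12 q)^[b] ((PsiX1 q)^[c] v)) = PsiX1 q (PsiX2 q v))
    (n : ℕ) :
    psi1Eigen q n ^ c = psi1Eigen q n ∧
      (b * psi12Coeff q (n + 1) 1 + a * psiCoeff q 1) * psi1Eigen q n ^ c =
        psi1Eigen q (n + 1) * psiCoeff q 1 := by
  have hL := (((StartsWith.single n).iterate_mul_left (psi1Eigen q) c).iterate_lowerConv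
    (psi12Coeff_zero q) b).iterate_lowerConv (fun _ => psiCoeff_zero q) a
  have hR := ((StartsWith.single n).lowerConv (fun _ => psiCoeff_zero q)).mul_left (psi1Eigen q)
  rw [← PsiX1_eq_mul, ← PsiX12_eq_lowerConv, ← PsiX2_eq_lowerConv, h] at hL
  rw [← PsiX2_eq_lowerConv] at hR
  constructor
  · simpa using hL.apply_self.symm.trans hR.apply_self
  · linear_combination hL.apply_succ.symm.trans hR.apply_succ

lemma injective_one_add_pow_two_mul_add_one (hq : ‖q‖ < 1) (hq0 : q ≠ 0) :
    Function.Injective fun n : ℕ => 1 + q ^ (2 * n + 1) := by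
  intro m n hmn
  have h := congrArg norm (add_left_cancel hmn)
  simp only [norm_pow] at h
  simpa using pow_right_injective₀ (norm_pos_iff.2 hq0) hq.ne h

theorem PsiX_factorization_unique (hq : ‖q‖ < 1) (hq0 : q ≠ 0) {a b c : ℕ}
    (h : ∀ v : ℕ → ℂ, (PsiX2 q)^[a] ((PsiX12 q)^[b] ((PsiX1 q)^[c] v)) = PsiX1 q (PsiX2 q v)) :
    a = 1 ∧ b = 1 ∧ c = 1 := by
  have hE := psi1Eigen_pow_eq_and_subdiag_eq h
  have hc : c = 1 := by
    refine eq_one_of_forall_pow_eq_self (injective_one_add_pow_two_mul_add_one hq hq0)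
      (fun n => one_add_ne_zero_of_norm_lt_one (norm_pow_lt_one hq (by omega))) fun n => ?_
    have hsucc := (hE (n + 1)).1
    rw [psi1Eigen_succ hq, mul_pow, (hE n).1] at hsucc
    exact mul_right_cancel₀ (psi1Eigen_ne_zero hq n) hsucc
  subst hc
  have hlin : ∀ n : ℕ, (b : ℂ) * q ^ (2 * n + 1) + a = 1 + q ^ (2 * n + 1) := fun n => by
    have hsub := (hE n).2
    rw [pow_one, psi12Coeff_succ_one, psi1Eigen_succ hq] at hsub
    exact mul_right_cancel₀ (mul_ne_zero (psiCoeff_one_ne_zero hq hq0) (psi1Eigen_ne_zero hq n))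
      (by linear_combination hsub)
  have hb : (b : ℂ) = 1 := by
    have : ((b : ℂ) - 1) * (q * (1 - q ^ 2)) = 0 := by linear_combination hlin 0 - hlin 1
    simpa [sub_eq_zero, hq0, one_sub_ne_zero_of_norm_lt_one (norm_pow_lt_one hq two_ne_zero)]
      using this
  have ha : (a : ℂ) = 1 := by linear_combination hlin 0 - q * hb
  exact ⟨by exact_mod_cast ha, by exact_mod_cast hb, rfl⟩

/-- The A₂ wall-crossing formula
`Ψ(-X_{α₁})Ψ(-X_{α₂}) = Ψ(-X_{α₂})Ψ(-X_{α₁+α₂})Ψ(-X_{α₁})`, together with uniqueness of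
the BPS degeneracies: any product `Ψ(-X_{α₂})^a Ψ(-X_{α₁+α₂})^b Ψ(-X_{α₁})^c` over the
positive roots, in the slope ordering, that equals the left-hand side must have
`a = b = c = 1`. -/
theorem a2_wall_crossing_unique (q : ℂ) (hq : ‖q‖ < 1) (hq0 : q ≠ 0) :
    (∀ v : ℕ → ℂ, PsiX1 q (PsiX2 q v) = PsiX2 q (PsiX12 q (PsiX1 q v))) ∧
    ∀ a b c : ℕ,
      (∀ v : ℕ → ℂ, (PsiX2 q)^[a] ((PsiX12 q)^[b] ((PsiX1 q)^[c] v)) =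
          PsiX1 q (PsiX2 q v)) →
      a = 1 ∧ b = 1 ∧ c = 1 :=
  ⟨PsiX1_PsiX2 hq, fun _ _ _ => PsiX_factorization_unique hq hq0⟩
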